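/- arXiv:2506.22268 — 3 statements merged into one kernel-verified Lean document; each statement's English description precedes it below -/
import Mathlib

section
/- Let G be a group and x, y, z ∈ G three involutions (elements of order 2). Then the generalized order of xyz satisfies e(xyz) ≤ 4; explicitly, with g = xyz one has g · g^z · g^x · g^{zx} = 1. -/
/-!
With `g = xyz` one has `g · g^z = (xy)²` because `z² = 1`, and `g^x · g^{zx} = (g · g^z)^x`.
Conjugating `(xy)²` by the involution `x` gives `(yx)² = ((xy)²)⁻¹`, so the four conjugates
multiply to `1`.
-/

/-- The generalized order of `g`: the smallest positive `k` such that some product of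
`k` conjugates of `g` equals the identity. -/
noncomputable def genOrder {G : Type*} [Group G] (g : G) : ℕ :=
  sInf {k | 0 < k ∧ ∃ l : List G, l.length = k ∧ (l.map fun x => x⁻¹ * g * x).prod = 1}

section

variable {G : Type*} [Group G]

theorem genOrder_le_length {g : G} {l : List G} (hl : l ≠ [])
    (h : (l.map fun t => t⁻¹ * g * t).prod = 1) : genOrder g ≤ l.length :=
  Nat.sInf_le ⟨List.length_pos_of_ne_nil hl, l, rfl, h⟩

theorem mul_conj_mul_conj_mul_conj_eq (g s t : G) :
    g * (s⁻¹ * g * s) * (t⁻¹ * g * t) * ((s * t)⁻¹ * g * (s * t)) =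
      g * (s⁻¹ * g * s) * (t⁻¹ * (g * (s⁻¹ * g * s)) * t) := by
  group

theorem mul_mul_conj_self_of_sq_eq_one (x y : G) {z : G} (hz : z ^ 2 = 1) :
    x * y * z * (z⁻¹ * (x * y * z) * z) = (x * y) ^ 2 :=
  calc _ = x * y * x * y * z ^ 2 := by rw [sq z]; group
    _ = (x * y) ^ 2 := by rw [hz, mul_one, sq]; group

theorem conj_mul_sq_of_inv_eq_self {x y : G} (hx : x⁻¹ = x) (hy : y⁻¹ = y) :
    x⁻¹ * (x * y) ^ 2 * x = ((x * y) ^ 2)⁻¹ := by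
  conv_rhs => rw [← inv_pow, mul_inv_rev, hx, hy]
  simp only [sq]
  group

end

theorem stmt2 {G : Type*} [Group G] (x y z : G)
    (hx : orderOf x = 2) (hy : orderOf y = 2) (hz : orderOf z = 2) :
    (x * y * z) * (z⁻¹ * (x * y * z) * z) * (x⁻¹ * (x * y * z) * x) *
      ((z * x)⁻¹ * (x * y * z) * (z * x)) = 1 ∧
    genOrder (x * y * z) ≤ 4 := by
  have key : (x * y * z) * (z⁻¹ * (x * y * z) * z) * (x⁻¹ * (x * y * z) * x) *
      ((z * x)⁻¹ * (x * y * z) * (z * x)) = 1 := by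
    rw [mul_conj_mul_conj_mul_conj_eq,
      mul_mul_conj_self_of_sq_eq_one x y (hz ▸ pow_orderOf_eq_one z),
      conj_mul_sq_of_inv_eq_self (inv_eq_self_of_orderOf_eq_two hx)
        (inv_eq_self_of_orderOf_eq_two hy),
      mul_inv_cancel]
  refine ⟨key, ?_⟩
  simpa using genOrder_le_length (g := x * y * z) (l := [1, z, x, z * x]) (List.cons_ne_nil _ _)
    (by simpa [mul_assoc] using key)
end

section
/- Let G be a finite group and g ∈ G a semirational element of order n. Let I = {m : 1 ≤ m ≤ n, gcd(m,n)=1}, I₁ = {m ∈ I : g is conjugate to g^m}, I₂ = {m ∈ I : g⁻¹ is conjugate to g^m}. Then 1 ∈ I₁, n−1 ∈ I₂ and I₁ ∪ I₂ = I. Moreover if h is a positive integer with e(g) > h+1, then for all m₁,…,m_h ∈ I₁ with m₁+⋯+m_h (mod n) lying in I, one has m₁+⋯+m_h (mod n) ∈ I₁. -/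
section

variable {G : Type*} [Group G]

theorem IsConj.inv {a b : G} (h : IsConj a b) : IsConj a⁻¹ b⁻¹ := by
  obtain ⟨c, rfl⟩ := isConj_iff.mp h
  exact isConj_iff.mpr ⟨c, by group⟩

theorem List.prod_map_pow (g : G) (l : List ℕ) : (l.map (g ^ ·)).prod = g ^ l.sum := by
  induction l with
  | nil => simp
  | cons a l ih => simp [pow_add, ih]

theorem pow_val_eq_zpow {g : G} [NeZero (orderOf g)] {a : ZMod (orderOf g)} {k : ℤ}
    (h : (k : ZMod (orderOf g)) = a) : g ^ a.val = g ^ k := by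
  rw [← zpow_natCast, zpow_eq_zpow_iff_modEq, ← ZMod.intCast_eq_intCast_iff, h,
    Int.cast_natCast, ZMod.natCast_zmod_val]

theorem genOrder_le_length_s4 {g : G} {l : List G} (hl : l ≠ []) (hconj : ∀ x ∈ l, IsConj g x)
    (hprod : l.prod = 1) : genOrder g ≤ l.length := by
  have hrange : l ∈ Set.range (List.map fun x => x⁻¹ * g * x) := by
    rw [Set.range_list_map]
    intro x hx
    obtain ⟨c, rfl⟩ := isConj_iff.mp (hconj x hx)
    exact ⟨c⁻¹, by group⟩
  obtain ⟨conjugators, hmap⟩ := hrange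
  refine Nat.sInf_le ⟨List.length_pos_iff.mpr hl, conjugators, ?_, hmap ▸ hprod⟩
  rw [← hmap, List.length_map]

theorem genOrder_le_length_succ {g : G} {l : List G} (hconj : ∀ x ∈ l, IsConj g x)
    (hprod : IsConj g⁻¹ l.prod) : genOrder g ≤ l.length + 1 := by
  have hinv : IsConj g l.prod⁻¹ := inv_inv g ▸ hprod.inv
  have hconj' (x : G) (hx : x ∈ l ++ [l.prod⁻¹]) : IsConj g x := by
    rcases List.mem_append.mp hx with hx | hx
    · exact hconj x hx
    · exact List.mem_singleton.mp hx ▸ hinv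
  simpa using genOrder_le_length_s4 (l := l ++ [l.prod⁻¹]) (by simp) hconj' (by simp)

end

theorem stmt4 {G : Type*} [Group G] [Finite G] (g : G) (n : ℕ) (hn : orderOf g = n)
    (hsemi : ∀ m : ℕ, Nat.Coprime m n → IsConj g (g ^ m) ∨ IsConj g⁻¹ (g ^ m))
    (I I1 I2 : Set (ZMod n))
    (hI : I = {m : ZMod n | IsUnit m})
    (hI1 : I1 = {m : ZMod n | m ∈ I ∧ IsConj g (g ^ m.val)})
    (hI2 : I2 = {m : ZMod n | m ∈ I ∧ IsConj g⁻¹ (g ^ m.val)}) :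
    (1 : ZMod n) ∈ I1 ∧ (-1 : ZMod n) ∈ I2 ∧ I1 ∪ I2 = I ∧
    ∀ h : ℕ, 0 < h → h + 1 < genOrder g →
      ∀ f : Fin h → ZMod n, (∀ i, f i ∈ I1) → (∑ i, f i) ∈ I → (∑ i, f i) ∈ I1 := by
  subst hn hI hI1 hI2
  have : NeZero (orderOf g) := ⟨(orderOf_pos g).ne'⟩
  have hsemi' (m : ZMod (orderOf g)) (hm : IsUnit m) :
      IsConj g (g ^ m.val) ∨ IsConj g⁻¹ (g ^ m.val) :=
    hsemi _ (ZMod.val_coe_unit_coprime hm.unit)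
  refine ⟨⟨isUnit_one, by rw [pow_val_eq_zpow (k := 1) Int.cast_one, zpow_one]⟩,
    ⟨isUnit_one.neg, by rw [pow_val_eq_zpow (k := -1) (by simp), zpow_neg_one]⟩, ?_, ?_⟩
  · ext m
    simp only [Set.mem_union, Set.mem_ofPred_eq]
    refine ⟨by rintro (⟨hm, -⟩ | ⟨hm, -⟩) <;> exact hm, fun hm => ?_⟩
    exact (hsemi' m hm).imp (⟨hm, ·⟩) (⟨hm, ·⟩)
  · intro h _ hlt f hf hunit
    refine ⟨hunit, (hsemi' _ hunit).resolve_right fun hinv => ?_⟩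
    have hsum : g ^ (∑ i, f i).val = (List.ofFn fun i => g ^ (f i).val).prod := by
      rw [show (List.ofFn fun i => g ^ (f i).val) = (List.ofFn fun i => (f i).val).map (g ^ ·)
        by rw [List.map_ofFn]; rfl, List.prod_map_pow, List.sum_ofFn,
        pow_val_eq_zpow (k := ((∑ i, (f i).val : ℕ) : ℤ)) (by simp), zpow_natCast]
    have hle := genOrder_le_length_succ (by simpa using fun i => (hf i).2) (hsum ▸ hinv)
    simp only [List.length_ofFn] at hle
    omega
end

section
/- Let F be a finite field of size q, n ≥ 2, d = gcd(n, q−1), and G = PSL_n(F). Then e(G) ≥ min{n, (q−1)/d}, where e(G) is the maximum over g ∈ G of the generalized order e(g). -/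
/-!
Let `a` generate `Fˣ` and let `g` be the image of `diag(a, …, a, a^(1-n))`. Every conjugate of
`g` is `a • 1` plus a matrix of rank at most one, so a product of `k` conjugates differs from
`a^k • 1` by a matrix of rank at most `k`. If that product is trivial in `PSL`, it is a scalar
`ω • 1` in `SL`. Either `ω ≠ a^k`, and the invertible matrix `(ω - a^k) • 1` forces `n ≤ k`; or
`ω = a^k`, so `(a^n)^k = ω^n = 1` and `k` is a multiple of the order `(q-1)/gcd(n, q-1)` of `a^n`.
-/

open Matrix

theorem le_genOrder_of_forall {G : Type*} [Group G] [Finite G] {g : G} {m : ℕ}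
    (h : ∀ l : List G, 0 < l.length → (l.map fun x => x⁻¹ * g * x).prod = 1 → m ≤ l.length) :
    m ≤ genOrder g := by
  refine le_csInf ⟨orderOf g, orderOf_pos g, List.replicate (orderOf g) 1,
    List.length_replicate, by simp [List.map_replicate, pow_orderOf_eq_one]⟩ ?_
  rintro k ⟨hk, l, rfl, hl⟩
  exact h l hk hl

theorem QuotientGroup.exists_list_prod_conj_mem {G : Type*} [Group G] {N : Subgroup G}
    [N.Normal] {g : G} {l : List (G ⧸ N)}
    (h : (l.map fun x => x⁻¹ * (g : G ⧸ N) * x).prod = 1) :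
    ∃ l' : List G, l'.length = l.length ∧ (l'.map fun x => x⁻¹ * g * x).prod ∈ N := by
  obtain ⟨l', rfl⟩ := List.map_surjective_iff.mpr QuotientGroup.mk_surjective l
  refine ⟨l', (List.length_map _).symm, (QuotientGroup.eq_one_iff _).mp ?_⟩
  rw [← QuotientGroup.mk'_apply, map_list_prod, List.map_map]
  simpa [List.map_map, Function.comp_def] using h

namespace Matrix

variable {ι F : Type*} [Fintype ι] [Field F]

theorem rank_add_le {m : Type*} (A B : Matrix m ι F) :
    (A + B).rank ≤ A.rank + B.rank := by
  have h : LinearMap.range (A + B).mulVecLin ≤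
      LinearMap.range A.mulVecLin ⊔ LinearMap.range B.mulVecLin := by
    rw [mulVecLin_add]
    exact LinearMap.range_add_le _ _
  exact (Submodule.finrank_mono h).trans (Submodule.finrank_add_le_finrank_add_finrank _ _)

variable [DecidableEq ι]

theorem rank_smul_le (c : F) (A : Matrix ι ι F) : (c • A).rank ≤ A.rank := by
  simpa using rank_mul_le_right (c • 1 : Matrix ι ι F) A

theorem rank_list_prod_sub_smul_one_le {a : F} (l : List (Matrix ι ι F))
    (h : ∀ C ∈ l, (C - a • 1).rank ≤ 1) :
    (l.prod - a ^ l.length • 1).rank ≤ l.length := by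
  induction l with
  | nil => simp
  | cons C t ih =>
    have hC := h C List.mem_cons_self
    have ht := ih fun D hD => h D (List.mem_cons_of_mem _ hD)
    have hsplit : (C :: t).prod - a ^ (C :: t).length • 1 =
        (C - a • 1) * t.prod + a • (t.prod - a ^ t.length • 1) := by
      rw [List.prod_cons, List.length_cons, sub_mul, smul_mul, one_mul, smul_sub, smul_smul,
        ← pow_succ']
      abel
    calc ((C :: t).prod - a ^ (C :: t).length • 1).rank
        ≤ ((C - a • 1) * t.prod).rank + (a • (t.prod - a ^ t.length • 1)).rank :=
          hsplit ▸ rank_add_le _ _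
      _ ≤ (C - a • 1).rank + (t.prod - a ^ t.length • 1).rank :=
          add_le_add (rank_mul_le_left _ _) (rank_smul_le _ _)
      _ ≤ (C :: t).length := by simp only [List.length_cons]; omega

theorem card_le_length_or_eq_pow_of_list_prod_eq_smul_one {a ω : F} (l : List (Matrix ι ι F))
    (h : ∀ C ∈ l, (C - a • 1).rank ≤ 1) (hprod : l.prod = ω • 1) :
    Fintype.card ι ≤ l.length ∨ ω = a ^ l.length := by
  refine or_iff_not_imp_right.mpr fun hω => ?_
  have hrank := rank_list_prod_sub_smul_one_le l h
  rwa [hprod, ← sub_smul, rank_smul_of_mem_nonZeroDivisors _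
    (mem_nonZeroDivisors_of_ne_zero (sub_ne_zero.mpr hω)), rank_one] at hrank

theorem exists_specialLinearGroup_rank_sub_smul_one_le_one (a : Fˣ) :
    ∃ A : SpecialLinearGroup ι F, ((A : Matrix ι ι F) - (a : F) • 1).rank ≤ 1 := by
  classical
  cases isEmpty_or_nonempty ι with
  | inl _ => exact ⟨1, (rank_le_card_width _).trans (by simp)⟩
  | inr hι =>
    obtain ⟨i⟩ := hι
    let w : ι → F := Function.update (fun _ => (a : F)) i ((a⁻¹ ^ (Fintype.card ι - 1) : Fˣ) : F)
    have hdet : (diagonal w).det = 1 := by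
      rw [det_diagonal, Finset.prod_update_of_mem (Finset.mem_univ i), Finset.prod_const]
      simp [Finset.card_sdiff]
    refine ⟨⟨diagonal w, hdet⟩, ?_⟩
    have hsupp : ∀ j, w j - a ≠ 0 → j = i := fun j hj => by
      by_contra hji
      exact hj (by simp [w, hji])
    rw [smul_one_eq_diagonal, diagonal_sub, rank_diagonal, Fintype.card_le_one_iff]
    rintro ⟨j, hj⟩ ⟨k, hk⟩
    exact Subtype.ext ((hsupp j hj).trans (hsupp k hk).symm)

end Matrix

namespace Matrix.SpecialLinearGroup

variable {ι : Type*} [Fintype ι] [DecidableEq ι]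

theorem rank_conj_sub_smul_one {R : Type*} [CommRing R] (A y : SpecialLinearGroup ι R) (a : R) :
    ((↑(y⁻¹ * A * y) : Matrix ι ι R) - a • 1).rank = ((A : Matrix ι ι R) - a • 1).rank := by
  have hconj : ((↑(y⁻¹ * A * y) : Matrix ι ι R) - a • 1) =
      (y⁻¹ : SpecialLinearGroup ι R) * ((A : Matrix ι ι R) - a • 1) * y := by
    have hinv : ((y⁻¹ : SpecialLinearGroup ι R) : Matrix ι ι R) * y = 1 := by
      rw [← coe_mul, inv_mul_cancel, coe_one]
    rw [mul_sub, sub_mul, Matrix.mul_smul, mul_one, Matrix.smul_mul, hinv, coe_mul, coe_mul]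
  rw [hconj, rank_mul_eq_left_of_isUnit_det _ _ (by rw [det_coe]; exact isUnit_one),
    rank_mul_eq_right_of_isUnit_det _ _ (by rw [det_coe]; exact isUnit_one)]

theorem card_le_length_or_pow_eq_one_of_list_prod_conj_mem_center {F : Type*} [Field F]
    {A : SpecialLinearGroup ι F} {a : F} (hA : ((A : Matrix ι ι F) - a • 1).rank ≤ 1) {l : List (SpecialLinearGroup ι F)}
    (hl : (l.map fun y => y⁻¹ * A * y).prod ∈ Subgroup.center (SpecialLinearGroup ι F)) :
    Fintype.card ι ≤ l.length ∨ (a ^ l.length) ^ Fintype.card ι = 1 := by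
  obtain ⟨ω, hωn, hω⟩ := mem_center_iff.mp hl
  have hprod : (l.map fun y => ((y⁻¹ * A * y : SpecialLinearGroup ι F) : Matrix ι ι F)).prod =
      ω • 1 := by
    rw [← coeMonoidHom_apply, map_list_prod, List.map_map] at hω
    rw [smul_one_eq_diagonal, ← scalar_apply, hω]
    rfl
  have hrank : ∀ C ∈ l.map fun y => ((y⁻¹ * A * y : SpecialLinearGroup ι F) : Matrix ι ι F),
      (C - a • 1).rank ≤ 1 :=
    List.forall_mem_map.mpr fun y _ => (rank_conj_sub_smul_one A y a).trans_le hA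
  rcases card_le_length_or_eq_pow_of_list_prod_eq_smul_one _ hrank hprod with h | h
  · exact .inl (by simpa using h)
  · exact .inr (by rw [List.length_map] at h; rw [← h, hωn])

end Matrix.SpecialLinearGroup

theorem stmt14_general {F : Type*} [Field F] [Fintype F] (n : ℕ) :
    ∃ g : Matrix.ProjectiveSpecialLinearGroup (Fin n) F,
      min n ((Fintype.card F - 1) / Nat.gcd n (Fintype.card F - 1)) ≤ genOrder g := by
  classical
  obtain ⟨ζ, hζ⟩ := IsCyclic.exists_generator (α := Fˣ)
  have hord : orderOf (ζ ^ n) = (Fintype.card F - 1) / Nat.gcd n (Fintype.card F - 1) := by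
    rw [orderOf_pow, orderOf_eq_card_of_forall_mem_zpowers hζ, Nat.card_eq_fintype_card,
      Fintype.card_units, Nat.gcd_comm]
  obtain ⟨A, hA⟩ := exists_specialLinearGroup_rank_sub_smul_one_le_one (ι := Fin n) ζ
  refine ⟨QuotientGroup.mk A, le_genOrder_of_forall fun l hl hprod => ?_⟩
  obtain ⟨l', hlen, hcenter⟩ := QuotientGroup.exists_list_prod_conj_mem hprod
  rw [← hlen] at hl ⊢
  rcases SpecialLinearGroup.card_le_length_or_pow_eq_one_of_list_prod_conj_mem_center hA hcenter
    with h | h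
  · exact min_le_of_left_le (by simpa using h)
  · refine min_le_of_right_le (hord ▸ Nat.le_of_dvd hl (orderOf_dvd_of_pow_eq_one ?_))
    exact Units.ext (by simpa [← pow_mul, mul_comm] using h)

theorem stmt14 {F : Type*} [Field F] [Fintype F] (n : ℕ) (hn : 2 ≤ n) :
    ∃ g : Matrix.ProjectiveSpecialLinearGroup (Fin n) F,
      min n ((Fintype.card F - 1) / Nat.gcd n (Fintype.card F - 1)) ≤ genOrder g :=
  stmt14_general n
end
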